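/- arXiv:2102.04502 — 3 statements merged into one kernel-verified Lean document; each statement's English description precedes it below -/
import Mathlib

section
/- Let P = (S_1, …, S_k) be a profile of k split systems on X and let p be a real number with 1/2 < p ≤ 1. Then the majority-rule consensus MR_p(P), defined as the set of splits A such that A ∈ S_i for at least p·k indices i, is itself a split system on X; in particular, any two splits each belonging to at least p·k of the S_i are compatible with each other, so the unrooted majority-rule consensus tree exists and is unique. -/
/-- An `X`-split, encoded as the part containing the distinguished taxon
`x₀`: a subset `A ⊆ X` with `x₀ ∈ A` and `A ≠ X` (representing `A | X∖A`). -/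
def IsSplit {X : Type*} (x₀ : X) (A : Set X) : Prop :=
  x₀ ∈ A ∧ A ≠ Set.univ

/-- Two splits (each encoded by the part containing the distinguished taxon)
are compatible if `A ⊆ B`, `B ⊆ A`, or `A ∪ B = X` (i.e. one of the four
intersections of their parts is empty). -/
def SplitCompatible {X : Type*} (A B : Set X) : Prop :=
  A ⊆ B ∨ B ⊆ A ∨ A ∪ B = Set.univ

/-- A split is trivial if one of its two parts is a singleton. -/
def IsTrivialSplit {X : Type*} (A : Set X) : Prop :=
  A.ncard = 1 ∨ (Set.univ \ A).ncard = 1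

/-- A split system on `X`: a family of pairwise compatible splits containing
all trivial splits (the split encoding of an unrooted phylogenetic `X`-tree,
which determines the tree uniquely by Buneman's theorem). -/
def IsSplitSystem {X : Type*} (x₀ : X) (S : Set (Set X)) : Prop :=
  (∀ A ∈ S, IsSplit x₀ A) ∧
  (∀ A ∈ S, ∀ B ∈ S, SplitCompatible A B) ∧
  ∀ A : Set X, IsSplit x₀ A → IsTrivialSplit A → A ∈ S

/-- The strict consensus of a profile: all splits present in every tree. -/
def strictCons {X : Type*} {k : ℕ} (P : Fin k → Set (Set X)) : Set (Set X) :=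
  {A | ∀ i, A ∈ P i}

/-- The majority-rule consensus `MR_p`: all splits present in at least `p·k`
of the input trees. -/
def majCons {X : Type*} (p : ℝ) {k : ℕ} (P : Fin k → Set (Set X)) : Set (Set X) :=
  {A | p * (k : ℝ) ≤ (({i : Fin k | A ∈ P i}).ncard : ℝ)}


lemma key_inter {k : ℕ} (hk : 1 ≤ k) {p : ℝ} (hp : 1 / 2 < p)
    {S T : Set (Fin k)}
    (hS : p * (k : ℝ) ≤ (S.ncard : ℝ)) (hT : p * (k : ℝ) ≤ (T.ncard : ℝ)) :
    (S ∩ T).Nonempty := by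
  by_contra h
  rw [Set.not_nonempty_iff_eq_empty] at h
  have hdisj : Disjoint S T := Set.disjoint_iff_inter_eq_empty.mpr h
  have hU : (S ∪ T).ncard = S.ncard + T.ncard :=
    Set.ncard_union_eq hdisj (Set.toFinite _) (Set.toFinite _)
  have hle : (S ∪ T).ncard ≤ k := by
    have := Set.ncard_le_ncard (Set.subset_univ (S ∪ T)) (Set.toFinite _)
    simpa [Set.ncard_univ] using this
  have hle' : (S.ncard : ℝ) + (T.ncard : ℝ) ≤ (k : ℝ) := by
    rw [hU] at hle; exact_mod_cast hle
  have hkpos : (0 : ℝ) < (k : ℝ) := by exact_mod_cast hk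
  nlinarith

/-- The majority-rule consensus of a profile of split systems is a split
system; in particular any two splits each belonging to at least `p·k` of the
input split systems are compatible, so the unrooted majority-rule consensus
tree exists and is unique. -/
theorem majority_rule_consensus_is_split_system
    {X : Type*} [Fintype X] (hX : 2 ≤ Fintype.card X) (x₀ : X)
    {k : ℕ} (hk : 1 ≤ k)
    (P : Fin k → Set (Set X)) (hP : ∀ i, IsSplitSystem x₀ (P i))
    (p : ℝ) (hp : 1 / 2 < p) (hp1 : p ≤ 1) :
    IsSplitSystem x₀ (majCons p P) ∧
    (∀ A₁ A₂ : Set X,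
      p * (k : ℝ) ≤ (({i : Fin k | A₁ ∈ P i}).ncard : ℝ) →
      p * (k : ℝ) ≤ (({i : Fin k | A₂ ∈ P i}).ncard : ℝ) →
      SplitCompatible A₁ A₂) := by
  have compat : ∀ A₁ A₂ : Set X,
      p * (k : ℝ) ≤ (({i : Fin k | A₁ ∈ P i}).ncard : ℝ) →
      p * (k : ℝ) ≤ (({i : Fin k | A₂ ∈ P i}).ncard : ℝ) →
      SplitCompatible A₁ A₂ := by
    intro A₁ A₂ h₁ h₂
    obtain ⟨i, hi₁, hi₂⟩ := key_inter hk hp h₁ h₂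
    exact (hP i).2.1 A₁ hi₁ A₂ hi₂
  have mem_split : ∀ A ∈ majCons p P, IsSplit x₀ A := by
    intro A hA
    obtain ⟨i, hi, _⟩ := key_inter hk hp hA hA
    exact (hP i).1 A hi
  refine ⟨⟨mem_split, fun A hA B hB => compat A B hA hB, ?_⟩, compat⟩
  intro A hsplit htriv
  have hall : {i : Fin k | A ∈ P i} = Set.univ := by
    ext i; simp [(hP i).2.2 A hsplit htriv]
  show p * (k : ℝ) ≤ _
  rw [hall, Set.ncard_univ]
  simp only [Nat.card_eq_fintype_card, Fintype.card_fin]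
  have hk0 : (0 : ℝ) ≤ (k : ℝ) := by positivity
  nlinarith
end

section
/- Matrix Representation with Compatibility (MRC) is not refinement-stable: there exist k ≥ 1, a finite set X with |X| = 4, and profiles P = (S_1, …, S_k) and P' = (S_1', …, S_k') of split systems on X with P' refining P, such that the multiset union B of the nontrivial splits of the S_i (each split counted once for each tree containing it) has a unique pairwise-compatible submultiset of maximum cardinality, with underlying split set Σ; likewise the multiset union B' of the nontrivial splits of the S_i' has a unique pairwise-compatible submultiset of maximum cardinality, with underlying split set Σ'; and Σ is not a subset of Σ' — indeed Σ contains a split incompatible with a split of Σ'. (One may take k = 3, P consisting of two star trees (trivial splits only) and one tree with the single nontrivial split {1,2}|{3,4}, and P' obtained by refining the two star trees to each carry the nontrivial split {1,3}|{2,4}.) -/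
open scoped Classical

/-- `C` is a maximum-cardinality pairwise-compatible submultiset of `B`. -/
def IsMaxCompatSub {X : Type*} (B C : Multiset (Set X)) : Prop :=
  C ≤ B ∧ (∀ A ∈ C, ∀ A' ∈ C, SplitCompatible A A') ∧
  ∀ D : Multiset (Set X), D ≤ B →
    (∀ A ∈ D, ∀ A' ∈ D, SplitCompatible A A') →
    Multiset.card D ≤ Multiset.card C

namespace MRCAux

def A1 : Set (Fin 4) := {0, 1}
def A2 : Set (Fin 4) := {0, 2}
def StarT : Set (Set (Fin 4)) := {A | IsSplit 0 A ∧ IsTrivialSplit A}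

lemma split_A1 : IsSplit (0 : Fin 4) A1 := by
  constructor
  · simp [A1]
  · intro h
    have : (3 : Fin 4) ∈ A1 := h ▸ Set.mem_univ _
    simp [A1] at this

lemma split_A2 : IsSplit (0 : Fin 4) A2 := by
  constructor
  · simp [A2]
  · intro h
    have : (3 : Fin 4) ∈ A2 := h ▸ Set.mem_univ _
    simp [A2] at this

lemma ncard_A1 : A1.ncard = 2 := by
  rw [A1, Set.ncard_pair]; decide

lemma ncard_A2 : A2.ncard = 2 := by
  rw [A2, Set.ncard_pair]; decide

lemma compl_A1 : Set.univ \ A1 = ({2, 3} : Set (Fin 4)) := by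
  ext x; simp [A1]; fin_cases x <;> simp

lemma compl_A2 : Set.univ \ A2 = ({1, 3} : Set (Fin 4)) := by
  ext x; simp [A2]; fin_cases x <;> simp

lemma nontriv_A1 : ¬ IsTrivialSplit A1 := by
  rintro (h | h)
  · rw [ncard_A1] at h; omega
  · rw [compl_A1, Set.ncard_pair (by decide)] at h; omega

lemma nontriv_A2 : ¬ IsTrivialSplit A2 := by
  rintro (h | h)
  · rw [ncard_A2] at h; omega
  · rw [compl_A2, Set.ncard_pair (by decide)] at h; omega

lemma incompat : ¬ SplitCompatible A1 A2 := by
  rintro (h | h | h)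
  · have := h (show (1 : Fin 4) ∈ A1 by simp [A1]); simp [A2] at this
  · have := h (show (2 : Fin 4) ∈ A2 by simp [A2]); simp [A1] at this
  · have : (3 : Fin 4) ∈ A1 ∪ A2 := h ▸ Set.mem_univ _
    simp [A1, A2] at this

lemma A1_ne_A2 : A1 ≠ A2 := by
  intro h; exact incompat (h ▸ Or.inl le_rfl)

lemma trivial_char (A : Set (Fin 4)) (hA : IsSplit 0 A) (hT : IsTrivialSplit A) :
    A = {0} ∨ ∃ y : Fin 4, y ≠ 0 ∧ A = {y}ᶜ := by
  rcases hT with h | h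
  · obtain ⟨a, ha⟩ := Set.ncard_eq_one.mp h
    left
    have : (0 : Fin 4) ∈ ({a} : Set (Fin 4)) := ha ▸ hA.1
    simp at this
    rw [ha, this]
  · obtain ⟨y, hy⟩ := Set.ncard_eq_one.mp h
    right
    have hcompl : Aᶜ = {y} := by rw [← Set.compl_eq_univ_diff] at hy; exact hy
    refine ⟨y, ?_, ?_⟩
    · intro h0
      have : (0 : Fin 4) ∈ Aᶜ := by rw [hcompl, h0]; simp
      exact this hA.1
    · rw [← hcompl, compl_compl]

lemma trivial_compat_left (A B : Set (Fin 4)) (hA : IsSplit 0 A) (hT : IsTrivialSplit A)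
    (hB : (0 : Fin 4) ∈ B) : SplitCompatible A B := by
  rcases trivial_char A hA hT with h | ⟨y, hy0, h⟩
  · left; rw [h]; simpa using hB
  · subst h
    by_cases hyB : y ∈ B
    · right; right
      ext x; simp only [Set.mem_union, Set.mem_compl_iff, Set.mem_singleton_iff, Set.mem_univ,
        iff_true]
      by_cases hx : x = y
      · right; rw [hx]; exact hyB
      · left; exact hx
    · right; left
      intro x hx hxy
      simp at hxy
      exact hyB (hxy ▸ hx)

lemma compat_symm {A B : Set (Fin 4)} (h : SplitCompatible A B) : SplitCompatible B A := by
  rcases h with h | h | h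
  · exact Or.inr (Or.inl h)
  · exact Or.inl h
  · exact Or.inr (Or.inr (Set.union_comm B A ▸ h))

lemma system_insert (A : Set (Fin 4)) (hA : IsSplit 0 A) :
    IsSplitSystem (0 : Fin 4) (StarT ∪ {A}) := by
  refine ⟨?_, ?_, ?_⟩
  · rintro B (hB | hB)
    · exact hB.1
    · simp at hB; exact hB ▸ hA
  · rintro B (hB | hB) C (hC | hC)
    · exact trivial_compat_left B C hB.1 hB.2 hC.1.1
    · simp at hC; exact hC ▸ trivial_compat_left B A hB.1 hB.2 hA.1
    · simp at hB; subst hB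
      exact compat_symm (trivial_compat_left C B hC.1 hC.2 hA.1)
    · simp at hB hC; subst hB; subst hC; exact Or.inl le_rfl
  · intro B hB hT; exact Or.inl ⟨hB, hT⟩

lemma system_star : IsSplitSystem (0 : Fin 4) StarT := by
  refine ⟨fun A hA => hA.1, ?_, fun A hA hT => ⟨hA, hT⟩⟩
  intro A hA B hB
  exact trivial_compat_left A B hA.1 hA.2 hB.1.1

lemma notmem_star_A1 : A1 ∉ StarT := fun h => nontriv_A1 h.2
lemma notmem_star_A2 : A2 ∉ StarT := fun h => nontriv_A2 h.2

lemma mem_star_trivial {A : Set (Fin 4)} (h : A ∈ StarT) : IsTrivialSplit A := h.2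

end MRCAux

open MRCAux

/-- MRC is not refinement-stable: there are profiles `P`, `P'` of split
systems on a 4-taxon set with `P'` refining `P` such that the multiset
unions `B`, `B'` of the nontrivial splits of the respective input trees each
have a unique maximum-cardinality pairwise-compatible submultiset (`C` resp.
`C'`), but the underlying split set of `C` is not contained in that of `C'`
-- indeed `C` contains a split incompatible with a split of `C'`. -/
theorem mrc_not_refinement_stable :
    ∃ (k : ℕ), 1 ≤ k ∧
      ∃ (P P' : Fin k → Set (Set (Fin 4)))
        (B B' C C' : Multiset (Set (Fin 4))),
        (∀ i, IsSplitSystem (0 : Fin 4) (P i)) ∧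
        (∀ i, IsSplitSystem (0 : Fin 4) (P' i)) ∧
        (∀ i, P i ⊆ P' i) ∧
        -- `B` is the multiset union of the nontrivial splits of the trees of
        -- `P`, each split counted once for each tree containing it:
        (∀ A : Set (Fin 4),
          Multiset.count A B =
            ({i : Fin k | A ∈ P i ∧ ¬ IsTrivialSplit A}).ncard) ∧
        -- likewise `B'` for `P'`:
        (∀ A : Set (Fin 4),
          Multiset.count A B' =
            ({i : Fin k | A ∈ P' i ∧ ¬ IsTrivialSplit A}).ncard) ∧
        -- `C` is the unique maximum pairwise-compatible submultiset of `B`: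
        IsMaxCompatSub B C ∧ (∀ D, IsMaxCompatSub B D → D = C) ∧
        -- `C'` is the unique maximum pairwise-compatible submultiset of `B'`:
        IsMaxCompatSub B' C' ∧ (∀ D, IsMaxCompatSub B' D → D = C') ∧
        -- the underlying split set of `C` is not contained in that of `C'`:
        ¬ {A | A ∈ C} ⊆ {A | A ∈ C'} ∧
        -- indeed `C` has a split incompatible with a split of `C'`:
        ∃ A ∈ C, ∃ A' ∈ C', ¬ SplitCompatible A A' := by
  classical
  refine ⟨3, by norm_num,
    ![StarT, StarT, StarT ∪ {A1}],
    ![StarT ∪ {A2}, StarT ∪ {A2}, StarT ∪ {A1}],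
    {A1}, A1 ::ₘ A2 ::ₘ {A2}, {A1}, A2 ::ₘ {A2},
    ?_, ?_, ?_, ?_, ?_, ?_, ?_, ?_, ?_, ?_, ?_⟩
  -- split systems for P
  · intro i; fin_cases i
    · exact system_star
    · exact system_star
    · exact system_insert A1 split_A1
  -- split systems for P'
  · intro i; fin_cases i
    · exact system_insert A2 split_A2
    · exact system_insert A2 split_A2
    · exact system_insert A1 split_A1
  -- refinement
  · intro i; fin_cases i
    · exact Set.subset_union_left
    · exact Set.subset_union_left
    · exact le_rfl
  -- count for B
  · intro A
    by_cases hA : A = A1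
    · subst hA
      have hset : {i : Fin 3 | A1 ∈ ![StarT, StarT, StarT ∪ {A1}] i ∧ ¬ IsTrivialSplit A1}
          = {(2 : Fin 3)} := by
        ext i
        simp only [Set.mem_setOf_eq, Set.mem_singleton_iff]
        constructor
        · rintro ⟨h, -⟩
          fin_cases i
          · exact absurd h notmem_star_A1
          · exact absurd h notmem_star_A1
          · rfl
        · rintro rfl
          exact ⟨Or.inr rfl, nontriv_A1⟩
      rw [hset, Set.ncard_singleton]
      simp
    · have hset : {i : Fin 3 | A ∈ ![StarT, StarT, StarT ∪ {A1}] i ∧ ¬ IsTrivialSplit A}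
          = (∅ : Set (Fin 3)) := by
        ext i
        simp only [Set.mem_setOf_eq, Set.mem_empty_iff_false, iff_false, not_and, not_not]
        intro h
        fin_cases i
        · exact mem_star_trivial h
        · exact mem_star_trivial h
        · replace h : A ∈ StarT ∪ {A1} := h
          rcases h with h | h
          · exact mem_star_trivial h
          · exact absurd h hA
      rw [hset, Set.ncard_empty]
      simp [Multiset.count_singleton, hA]
  -- count for B'
  · intro A
    by_cases hA : A = A1
    · subst hA
      have hset : {i : Fin 3 |
          A1 ∈ ![StarT ∪ {A2}, StarT ∪ {A2}, StarT ∪ {A1}] i ∧ ¬ IsTrivialSplit A1}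
          = {(2 : Fin 3)} := by
        ext i
        simp only [Set.mem_setOf_eq, Set.mem_singleton_iff]
        constructor
        · rintro ⟨h, -⟩
          fin_cases i
          · replace h : A1 ∈ StarT ∪ {A2} := h
            rcases h with h | h
            · exact absurd h notmem_star_A1
            · exact absurd h A1_ne_A2
          · replace h : A1 ∈ StarT ∪ {A2} := h
            rcases h with h | h
            · exact absurd h notmem_star_A1
            · exact absurd h A1_ne_A2
          · rfl
        · rintro rfl
          exact ⟨Or.inr rfl, nontriv_A1⟩
      rw [hset, Set.ncard_singleton, Multiset.count_cons_self]
      have h0 : Multiset.count A1 (A2 ::ₘ {A2}) = 0 := by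
        rw [Multiset.count_eq_zero]
        intro h
        rcases Multiset.mem_cons.mp h with h | h
        · exact A1_ne_A2 h
        · exact A1_ne_A2 (Multiset.mem_singleton.mp h)
      omega
    · by_cases hA2 : A = A2
      · subst hA2
        have hset : {i : Fin 3 |
            A2 ∈ ![StarT ∪ {A2}, StarT ∪ {A2}, StarT ∪ {A1}] i ∧ ¬ IsTrivialSplit A2}
            = {(0 : Fin 3), 1} := by
          ext i
          simp only [Set.mem_setOf_eq, Set.mem_insert_iff, Set.mem_singleton_iff]
          constructor
          · rintro ⟨h, -⟩
            fin_cases i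
            · exact Or.inl rfl
            · exact Or.inr rfl
            · replace h : A2 ∈ StarT ∪ {A1} := h
              rcases h with h | h
              · exact absurd h notmem_star_A2
              · exact absurd h.symm A1_ne_A2
          · rintro (rfl | rfl)
            · exact ⟨Or.inr rfl, nontriv_A2⟩
            · exact ⟨Or.inr rfl, nontriv_A2⟩
        rw [hset, Set.ncard_pair (by decide)]
        rw [Multiset.count_cons_of_ne A1_ne_A2.symm, Multiset.count_cons_self]
        simp
      · have hset : {i : Fin 3 |
            A ∈ ![StarT ∪ {A2}, StarT ∪ {A2}, StarT ∪ {A1}] i ∧ ¬ IsTrivialSplit A}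
            = (∅ : Set (Fin 3)) := by
          ext i
          simp only [Set.mem_setOf_eq, Set.mem_empty_iff_false, iff_false, not_and, not_not]
          intro h
          fin_cases i
          · replace h : A ∈ StarT ∪ {A2} := h
            rcases h with h | h
            · exact mem_star_trivial h
            · exact absurd h hA2
          · replace h : A ∈ StarT ∪ {A2} := h
            rcases h with h | h
            · exact mem_star_trivial h
            · exact absurd h hA2
          · replace h : A ∈ StarT ∪ {A1} := h
            rcases h with h | h
            · exact mem_star_trivial h
            · exact absurd h hA
        rw [hset, Set.ncard_empty, Multiset.count_eq_zero]
        intro h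
        rcases Multiset.mem_cons.mp h with h | h
        · exact hA h
        · rcases Multiset.mem_cons.mp h with h | h
          · exact hA2 h
          · exact hA2 (Multiset.mem_singleton.mp h)
  -- C is max compat sub of B
  · refine ⟨le_rfl, ?_, ?_⟩
    · intro A hA A' hA'
      rw [Multiset.mem_singleton.mp hA, Multiset.mem_singleton.mp hA']
      exact Or.inl le_rfl
    · intro D hD _
      exact Multiset.card_le_card hD
  -- uniqueness of C
  · rintro D ⟨hDB, hDc, hDmax⟩
    have h1 := hDmax {A1} le_rfl (by
      intro A hA A' hA'
      rw [Multiset.mem_singleton.mp hA, Multiset.mem_singleton.mp hA']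
      exact Or.inl le_rfl)
    exact Multiset.eq_of_le_of_card_le hDB h1
  -- C' is max compat sub of B'
  · refine ⟨Multiset.le_cons_self _ _, ?_, ?_⟩
    · intro A hA A' hA'
      have h1 : A = A2 := by
        rcases Multiset.mem_cons.mp hA with h | h
        · exact h
        · exact Multiset.mem_singleton.mp h
      have h2 : A' = A2 := by
        rcases Multiset.mem_cons.mp hA' with h | h
        · exact h
        · exact Multiset.mem_singleton.mp h
      rw [h1, h2]; exact Or.inl le_rfl
    · intro D hD hDc
      by_contra hc
      push_neg at hc
      have hcard2 : Multiset.card (A2 ::ₘ ({A2} : Multiset (Set (Fin 4)))) = 2 := by simp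
      rw [hcard2] at hc
      have h3 : Multiset.card (A1 ::ₘ A2 ::ₘ ({A2} : Multiset (Set (Fin 4))))
          ≤ Multiset.card D := by simp; omega
      have hDeq := Multiset.eq_of_le_of_card_le hD h3
      subst hDeq
      exact incompat (hDc A1 (Multiset.mem_cons_self _ _) A2
        (Multiset.mem_cons.mpr (Or.inr (Multiset.mem_cons_self _ _))))
  -- uniqueness of C'
  · rintro D ⟨hDB, hDc, hDmax⟩
    have h2 : 2 ≤ Multiset.card D := by
      have := hDmax (A2 ::ₘ {A2}) (Multiset.le_cons_self _ _) (by
        intro A hA A' hA'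
        have h1 : A = A2 := by
          rcases Multiset.mem_cons.mp hA with h | h
          · exact h
          · exact Multiset.mem_singleton.mp h
        have h2 : A' = A2 := by
          rcases Multiset.mem_cons.mp hA' with h | h
          · exact h
          · exact Multiset.mem_singleton.mp h
        rw [h1, h2]; exact Or.inl le_rfl)
      simpa using this
    have hA1notD : A1 ∉ D := by
      intro h1
      have herase : D.erase A1 ≤ (A1 ::ₘ A2 ::ₘ ({A2} : Multiset (Set (Fin 4)))).erase A1 :=
        Multiset.erase_le_erase A1 hDB
      rw [Multiset.erase_cons_head] at herase
      obtain ⟨x, hx⟩ : ∃ x, x ∈ D.erase A1 := by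
        rw [← Multiset.card_pos_iff_exists_mem, Multiset.card_erase_of_mem h1]
        exact Nat.pred_le_pred h2
      have hxm : x ∈ (A2 ::ₘ ({A2} : Multiset (Set (Fin 4)))) := Multiset.mem_of_le herase hx
      have hx2 : x = A2 := by
        rcases Multiset.mem_cons.mp hxm with h | h
        · exact h
        · exact Multiset.mem_singleton.mp h
      exact incompat (hDc A1 h1 A2 (hx2 ▸ Multiset.mem_of_mem_erase hx))
    have hDC' : D ≤ A2 ::ₘ ({A2} : Multiset (Set (Fin 4))) := by
      rw [Multiset.le_iff_count]
      intro a
      by_cases ha : a = A1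
      · subst ha
        rw [Multiset.count_eq_zero.mpr hA1notD]
        omega
      · have hle := Multiset.le_iff_count.mp hDB a
        rwa [Multiset.count_cons_of_ne ha] at hle
    exact Multiset.eq_of_le_of_card_le hDC' (by simpa using h2)
  -- not subset
  · intro h
    have h1 : A1 ∈ (A2 ::ₘ ({A2} : Multiset (Set (Fin 4)))) := h (Multiset.mem_singleton_self _)
    rcases Multiset.mem_cons.mp h1 with h | h
    · exact A1_ne_A2 h
    · exact A1_ne_A2 (Multiset.mem_singleton.mp h)
  -- incompatible witness
  · exact ⟨A1, Multiset.mem_singleton_self _, A2, Multiset.mem_cons_self _ _, incompat⟩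
end

section
/- Let φ be a refinement-stable and non-contradictory consensus method for profiles of k split systems on X. Then for every profile P = (S_1, …, S_k) and every split A ∈ φ(P), there is at least one index i with A ∈ S_i; that is, every split of the output tree is already induced by some input tree. -/
/-!
Suppose `A ∈ φ(P)` lies in no input tree `S_i`. Then every `S_i` admits a split `B_i` that is
compatible with `S_i` but not with `A`: either some split of `S_i` already conflicts with `A`, or
`A` is compatible with `S_i`, and then `A` resolves a vertex of the tree `S_i`; the other resolution
of that vertex is `B_i = C ∪ (E ∖ A)`, where `C` is the largest split of `S_i` below `A` and `E` the
smallest one above `A`. Adding `B_i` to each `S_i` refines the profile, so `A` is still in the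
output by refinement stability, yet `A` now conflicts with every input tree, contradicting
non-contradiction.
-/

open Set

section

variable {X : Type*}

lemma SplitCompatible.symm {A B : Set X} (h : SplitCompatible A B) : SplitCompatible B A := by
  rcases h with h | h | h
  · exact Or.inr (Or.inl h)
  · exact Or.inl h
  · exact Or.inr (Or.inr (by rwa [union_comm]))

lemma splitCompatible_union_diff {A C D E : Set X}
    (hCD : SplitCompatible C D) (hAD : SplitCompatible A D) (hED : SplitCompatible E D)
    (hC : D ⊆ A → C ⊆ D → D ⊆ C) (hE : A ⊆ D → D ⊆ E → E ⊆ D) :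
    SplitCompatible (C ∪ (E \ A)) D := by
  rcases hCD with hCD | hDC | hCD
  · rcases hAD with hAD | hDA | hAD
    · rcases hED with hED | hDE | hED
      · exact Or.inl (union_subset hCD (sdiff_subset.trans hED))
      · exact Or.inl (union_subset hCD (sdiff_subset.trans (hE hAD hDE)))
      · refine Or.inr (Or.inr (eq_univ_of_forall fun x => ?_))
        by_cases hxD : x ∈ D
        · exact Or.inr hxD
        · have hxE : x ∈ E := ((hED ▸ mem_univ x : x ∈ E ∪ D)).resolve_right hxD
          exact Or.inl (Or.inr ⟨hxE, fun hxA => hxD (hAD hxA)⟩)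
    · exact Or.inr (Or.inl ((hC hDA hCD).trans subset_union_left))
    · refine Or.inl (union_subset hCD fun x hx => ?_)
      exact ((hAD ▸ mem_univ x : x ∈ A ∪ D)).resolve_left hx.2
  · exact Or.inr (Or.inl (hDC.trans subset_union_left))
  · exact Or.inr (Or.inr (eq_univ_of_univ_subset
      (hCD ▸ union_subset_union_left D subset_union_left)))

lemma not_splitCompatible_union_diff {A C E : Set X} (hCA : C ⊂ A) (hAE : A ⊂ E)
    (hE : E ≠ univ) : ¬ SplitCompatible A (C ∪ (E \ A)) := by
  obtain ⟨a, haA, haC⟩ := exists_of_ssubset hCA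
  obtain ⟨e, heE, heA⟩ := exists_of_ssubset hAE
  obtain ⟨w, hwE⟩ := ne_univ_iff_exists_notMem E |>.1 hE
  have hsubE : A ∪ (C ∪ (E \ A)) ⊆ E :=
    union_subset hAE.subset (union_subset (hCA.subset.trans hAE.subset) sdiff_subset)
  rintro (h | h | h)
  · exact (h haA).elim haC fun ha => ha.2 haA
  · exact heA (h (Or.inr ⟨heE, heA⟩))
  · exact hwE (hsubE (h ▸ mem_univ w))

lemma IsSplit.of_subset {x₀ : X} {B E : Set X} (hE : IsSplit x₀ E) (hB : x₀ ∈ B)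
    (hBE : B ⊆ E) : IsSplit x₀ B :=
  ⟨hB, fun h => hE.2 (eq_univ_of_univ_subset (h ▸ hBE))⟩

namespace IsSplitSystem

variable {x₀ : X} {S : Set (Set X)}

lemma singleton_mem (hS : IsSplitSystem x₀ S) {z : X} (hz : z ≠ x₀) : {x₀} ∈ S :=
  hS.2.2 _ ⟨rfl, ne_univ_iff_exists_notMem _ |>.2 ⟨z, hz⟩⟩ (Or.inl (ncard_singleton x₀))

lemma compl_singleton_mem (hS : IsSplitSystem x₀ S) {z : X} (hz : z ≠ x₀) : {z}ᶜ ∈ S :=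
  hS.2.2 _ ⟨hz.symm, ne_univ_iff_exists_notMem _ |>.2 ⟨z, by simp⟩⟩ (Or.inr (by simp))

lemma insert (hS : IsSplitSystem x₀ S) {B : Set X} (hB : IsSplit x₀ B)
    (hBS : ∀ D ∈ S, SplitCompatible B D) : IsSplitSystem x₀ (Insert.insert B S) := by
  refine ⟨?_, ?_, fun C hC hCt => mem_insert_of_mem _ (hS.2.2 C hC hCt)⟩
  · rintro C (rfl | hC)
    exacts [hB, hS.1 C hC]
  · rintro C (rfl | hC) D (rfl | hD)
    exacts [Or.inl subset_rfl, hBS D hD, (hBS C hC).symm, hS.2.1 C hC D hD]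

lemma exists_maximal_subset [Finite X] (hS : IsSplitSystem x₀ S) {A : Set X}
    (hA : IsSplit x₀ A) : ∃ C, Maximal (fun C => C ∈ S ∧ C ⊆ A) C := by
  obtain ⟨z, hzA⟩ := ne_univ_iff_exists_notMem A |>.1 hA.2
  have hz : z ≠ x₀ := fun h => hzA (h ▸ hA.1)
  exact (toFinite {C | C ∈ S ∧ C ⊆ A}).exists_maximal
    ⟨{x₀}, hS.singleton_mem hz, singleton_subset_iff.2 hA.1⟩

lemma exists_minimal_superset [Finite X] (hS : IsSplitSystem x₀ S) {A : Set X}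
    (hA : IsSplit x₀ A) : ∃ E, Minimal (fun E => E ∈ S ∧ A ⊆ E) E := by
  obtain ⟨z, hzA⟩ := ne_univ_iff_exists_notMem A |>.1 hA.2
  have hz : z ≠ x₀ := fun h => hzA (h ▸ hA.1)
  exact (toFinite {E | E ∈ S ∧ A ⊆ E}).exists_minimal
    ⟨{z}ᶜ, hS.compl_singleton_mem hz, subset_compl_singleton_iff.2 hzA⟩

lemma exists_split_not_compatible_of_forall_compatible [Finite X] (hS : IsSplitSystem x₀ S)
    {A : Set X} (hA : IsSplit x₀ A) (hAS : A ∉ S) (hcomp : ∀ D ∈ S, SplitCompatible A D) :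
    ∃ B, IsSplit x₀ B ∧ ¬ SplitCompatible A B ∧ ∀ D ∈ S, SplitCompatible B D := by
  obtain ⟨C, ⟨hCS, hCA⟩, hCmax⟩ := hS.exists_maximal_subset hA
  obtain ⟨E, ⟨hES, hAE⟩, hEmin⟩ := hS.exists_minimal_superset hA
  have hCA' : C ⊂ A := hCA.ssubset_of_ne fun h => hAS (h ▸ hCS)
  have hAE' : A ⊂ E := hAE.ssubset_of_ne fun h => hAS (h ▸ hES)
  refine ⟨C ∪ (E \ A), (hS.1 E hES).of_subset (Or.inl (hS.1 C hCS).1)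
      (union_subset (hCA.trans hAE) sdiff_subset),
    not_splitCompatible_union_diff hCA' hAE' (hS.1 E hES).2, fun D hD => ?_⟩
  exact splitCompatible_union_diff (hS.2.1 C hCS D hD) (hcomp D hD) (hS.2.1 E hES D hD)
    (fun hDA => hCmax ⟨hD, hDA⟩) (fun hAD => hEmin ⟨hD, hAD⟩)

lemma exists_split_not_compatible [Finite X] (hS : IsSplitSystem x₀ S) {A : Set X}
    (hA : IsSplit x₀ A) (hAS : A ∉ S) :
    ∃ B, IsSplit x₀ B ∧ ¬ SplitCompatible A B ∧ ∀ D ∈ S, SplitCompatible B D := by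
  by_cases hcomp : ∀ D ∈ S, SplitCompatible A D
  · exact hS.exists_split_not_compatible_of_forall_compatible hA hAS hcomp
  · obtain ⟨B, hBS, hAB⟩ := not_forall₂.1 hcomp
    exact ⟨B, hS.1 B hBS, hAB, hS.2.1 B hBS⟩

end IsSplitSystem

end

theorem output_splits_present_in_input_general
    {X : Type*} [Fintype X] (x₀ : X)
    {k : ℕ}
    (φ : (Fin k → Set (Set X)) → Set (Set X))
    (hmap : ∀ P : Fin k → Set (Set X),
      (∀ i, IsSplitSystem x₀ (P i)) → IsSplitSystem x₀ (φ P))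
    (hstab : ∀ P P' : Fin k → Set (Set X),
      (∀ i, IsSplitSystem x₀ (P i)) → (∀ i, IsSplitSystem x₀ (P' i)) →
      (∀ i, P i ⊆ P' i) → φ P ⊆ φ P')
    (hnc : ∀ P : Fin k → Set (Set X), (∀ i, IsSplitSystem x₀ (P i)) →
      ∀ A ∈ φ P, ∃ i, ∀ A' ∈ P i, SplitCompatible A A')
    (P : Fin k → Set (Set X)) (hP : ∀ i, IsSplitSystem x₀ (P i)) :
    ∀ A ∈ φ P, ∃ i, A ∈ P i := by
  intro A hA
  by_contra! hAP
  choose B hB hBA hBP using fun i =>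
    (hP i).exists_split_not_compatible ((hmap P hP).1 A hA) (hAP i)
  have hP' : ∀ i, IsSplitSystem x₀ (insert (B i) (P i)) := fun i =>
    (hP i).insert (hB i) (hBP i)
  obtain ⟨i, hi⟩ := hnc _ hP' A (hstab P _ hP hP' (fun i => subset_insert _ _) hA)
  exact hBA i (hi (B i) (mem_insert _ _))

/-- If `φ` is a refinement-stable and non-contradictory consensus method for
profiles of split systems, then every split of the output `φ(P)` is already
induced by some input tree. -/
theorem output_splits_present_in_input
    {X : Type*} [Fintype X] (hX : 2 ≤ Fintype.card X) (x₀ : X)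
    {k : ℕ} (hk : 1 ≤ k)
    (φ : (Fin k → Set (Set X)) → Set (Set X))
    (hmap : ∀ P : Fin k → Set (Set X),
      (∀ i, IsSplitSystem x₀ (P i)) → IsSplitSystem x₀ (φ P))
    (hstab : ∀ P P' : Fin k → Set (Set X),
      (∀ i, IsSplitSystem x₀ (P i)) → (∀ i, IsSplitSystem x₀ (P' i)) →
      (∀ i, P i ⊆ P' i) → φ P ⊆ φ P')
    (hnc : ∀ P : Fin k → Set (Set X), (∀ i, IsSplitSystem x₀ (P i)) →
      ∀ A ∈ φ P, ∃ i, ∀ A' ∈ P i, SplitCompatible A A')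
    (P : Fin k → Set (Set X)) (hP : ∀ i, IsSplitSystem x₀ (P i)) :
    ∀ A ∈ φ P, ∃ i, A ∈ P i :=
  output_splits_present_in_input_general x₀ φ hmap hstab hnc P hP
end
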